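/- arXiv:2403.07387 — 7 statements merged into one kernel-verified Lean document; each statement's English description precedes it below -/
import Mathlib

section
/- The number of classical parking functions of length n (sequences (a_1,...,a_n) of positive integers whose nondecreasing rearrangement a'_1 ≤ ... ≤ a'_n satisfies a'_i ≤ i for all i) is (n+1)^(n-1). -/
/-- A classical parking function of length `n`: a sequence of positive integers
whose nondecreasing rearrangement `a'₁ ≤ ⋯ ≤ a'ₙ` satisfies `a'ᵢ ≤ i`. -/
def IsParkingFunction (n : ℕ) (a : Fin n → ℕ) : Prop :=
  (∀ i, 1 ≤ a i) ∧ ∃ σ : Equiv.Perm (Fin n),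
    Monotone (a ∘ σ) ∧ ∀ i : Fin n, a (σ i) ≤ (i : ℕ) + 1

/-!
Pollak's circular argument. Shifted down by one, a sequence with values in `{1, …, n + 1}`
becomes `b : Fin n → ZMod (n + 1)`: preferences of `n` cars among `n + 1` spots on a circle.
Let `excess b t` be the number of cars preferring one of the first `t` spots, read cyclically,
minus `t`; over a full turn it drops by exactly one. Rotating `b` by `-u` gives a parking
function iff the excess never falls below its value at `u` during the next turn, and because
of the drop exactly one `u < n + 1` has this property: the first point where the minimum over
a turn is attained. So each of the `(n + 1) ^ n` maps has exactly one rotation which is a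
parking function.
-/

open Finset

theorem existsUnique_forall_le_add_of_add_period {H : ℕ → ℤ} {p : ℕ} (hp : 0 < p)
    (hH : ∀ t, H (t + p) = H t - 1) :
    ∃! u, u < p ∧ ∀ k < p, H u ≤ H (u + k) := by
  have hmin : ∃ t, t < p ∧ ∀ s < p, H t ≤ H s := by
    obtain ⟨t, ht, hle⟩ := exists_min_image (range p) H ⟨0, mem_range.2 hp⟩
    exact ⟨t, mem_range.1 ht, fun s hs => hle s (mem_range.2 hs)⟩
  obtain ⟨hup, humin⟩ := Nat.find_spec hmin
  have hu : ∀ k < p, H (Nat.find hmin) ≤ H (Nat.find hmin + k) := by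
    intro k hk
    rcases lt_or_ge (Nat.find hmin + k) p with h | h
    · exact humin _ h
    · obtain ⟨s, hs⟩ : ∃ s, Nat.find hmin + k = s + p := ⟨_, (Nat.sub_add_cancel h).symm⟩
      -- `s` precedes the first minimiser, so it is not a minimiser at all
      obtain ⟨r, hrp, hrs⟩ : ∃ r < p, H r < H s := by
        have := Nat.find_min hmin (show s < Nat.find hmin by omega)
        push Not at this
        exact this (by omega)
      have := humin r hrp
      rw [hs, hH]
      omega
  have not_both : ∀ u v, u < v → v < p → (∀ k < p, H u ≤ H (u + k)) →
      ¬∀ k < p, H v ≤ H (v + k) := by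
    intro u v huv hvp hu hv
    have h₁ := hu (v - u) (by omega)
    have h₂ := hv (u + p - v) (by omega)
    rw [Nat.add_sub_cancel' huv.le] at h₁
    rw [show v + (u + p - v) = u + p by omega, hH] at h₂
    omega
  refine ⟨Nat.find hmin, ⟨hup, hu⟩, fun v ⟨hvp, hv⟩ => ?_⟩
  rcases lt_trichotomy v (Nat.find hmin) with h | h | h
  · exact (not_both _ _ h hup hv hu).elim
  · exact h
  · exact (not_both _ _ h hvp hu hv).elim

theorem Monotone.forall_le_add_one_iff {n : ℕ} {g : Fin n → ℕ} (hg : Monotone g) :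
    (∀ i : Fin n, g i ≤ i + 1) ↔ ∀ k ≤ n, k ≤ #{i | g i ≤ k} := by
  refine ⟨fun h k hk => ?_, fun h i => ?_⟩
  · calc k = #{i : Fin n | i < k} := by rw [Fin.card_filter_val_lt, min_eq_right hk]
      _ ≤ #{i | g i ≤ k} := card_le_card fun i hi => by
          simp only [mem_filter, mem_univ, true_and] at hi ⊢
          exact (h i).trans hi
  · by_contra! hi
    have hsub : #{j | g j ≤ i + 1} ≤ #{j : Fin n | j < (i : ℕ)} :=
      card_le_card fun j hj => by
        simp only [mem_filter, mem_univ, true_and] at hj ⊢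
        by_contra! hij
        exact (hi.trans_le (hg (Fin.le_def.2 hij))).not_ge hj
    have := (h (i + 1) i.2).trans hsub
    rw [Fin.card_filter_val_lt] at this
    omega

theorem isParkingFunction_iff_card {n : ℕ} {a : Fin n → ℕ} :
    IsParkingFunction n a ↔ (∀ i, 1 ≤ a i) ∧ ∀ k ≤ n, k ≤ #{i | a i ≤ k} := by
  have card_comp (σ : Equiv.Perm (Fin n)) (k : ℕ) : #{i | a (σ i) ≤ k} = #{i | a i ≤ k} :=
    card_bijective σ σ.bijective (by simp)
  refine and_congr_right fun _ => ⟨fun ⟨σ, hσ, hle⟩ => ?_, fun h => ?_⟩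
  · simpa only [Function.comp_apply, card_comp] using hσ.forall_le_add_one_iff.1 hle
  · refine ⟨Tuple.sort a, Tuple.monotone_sort a,
      (Tuple.monotone_sort a).forall_le_add_one_iff.2 ?_⟩
    simpa only [Function.comp_apply, card_comp] using h

theorem IsParkingFunction.le {n : ℕ} {a : Fin n → ℕ} (ha : IsParkingFunction n a)
    (i : Fin n) : a i ≤ n := by
  obtain ⟨-, σ, -, hle⟩ := ha
  simpa using (hle (σ.symm i)).trans (σ.symm i).2

def IsParkingFunctionZMod (n : ℕ) (b : Fin n → ZMod (n + 1)) : Prop :=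
  ∀ k ≤ n, k ≤ #{i | (b i).val < k}

theorem isParkingFunction_val_add_one_iff {n : ℕ} {b : Fin n → ZMod (n + 1)} :
    IsParkingFunction n (fun i => (b i).val + 1) ↔ IsParkingFunctionZMod n b := by
  simp [isParkingFunction_iff_card, IsParkingFunctionZMod]

theorem setOf_isParkingFunction_eq_image (n : ℕ) :
    {a | IsParkingFunction n a} =
      (fun b i => (b i).val + 1) '' {b : Fin n → ZMod (n + 1) | IsParkingFunctionZMod n b} := by
  ext a
  refine ⟨fun ha => ?_, fun ⟨b, hb, hba⟩ => hba ▸ isParkingFunction_val_add_one_iff.2 hb⟩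
  have hval : (fun i => (((a i - 1 : ℕ) : ZMod (n + 1))).val + 1) = a := funext fun i => by
    rw [ZMod.val_cast_of_lt (by have := ha.le i; omega)]
    have := ha.1 i
    omega
  refine ⟨_, isParkingFunction_val_add_one_iff.1 ?_, hval⟩
  rwa [hval]

theorem Nat.card_mul_card_eq_of_existsUnique_vadd_mem {G X : Type*} [AddGroup G] [AddAction G X]
    {S : Set X} (h : ∀ x, ∃! g : G, g +ᵥ x ∈ S) : Nat.card S * Nat.card G = Nat.card X := by
  rw [← Nat.card_prod]
  refine Nat.card_congr (Equiv.ofBijective (fun p => p.2 +ᵥ (p.1 : X)) ⟨?_, fun x => ?_⟩)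
  · rintro ⟨⟨s, hs⟩, g⟩ ⟨⟨s', hs'⟩, g'⟩ (hgg' : g +ᵥ s = g' +ᵥ s')
    have h₁ : (-g' + g) +ᵥ s = s' := by rw [add_vadd, hgg', neg_vadd_vadd]
    have : -g' + g = 0 := (h s).unique (h₁ ▸ hs') (by simpa using hs)
    obtain rfl : g' = g := by simpa [neg_add_eq_zero] using this
    simp_all
  · obtain ⟨g, hg, -⟩ := h x
    exact ⟨(⟨g +ᵥ x, hg⟩, -g), neg_vadd_vadd g x⟩

theorem ZMod.card_filter_val_lt_eq_sum {ι : Type*} [Fintype ι] {N : ℕ} [NeZero N]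
    (x : ι → ZMod N) {k : ℕ} (hk : k ≤ N) :
    #{i | (x i).val < k} = ∑ m ∈ range k, #{i | x i = m} := by
  rw [card_eq_sum_card_fiberwise (f := fun i => (x i).val) (t := range k)
    fun i hi => by simpa using hi]
  refine sum_congr rfl fun m hm => ?_
  rw [filter_filter]
  refine congrArg Finset.card (filter_congr fun i _ => ⟨fun ⟨_, h⟩ => ?_, fun h => ?_⟩)
  · rw [← h, ZMod.natCast_zmod_val]
  · have := mem_range.1 hm
    rw [h, ZMod.val_cast_of_lt (by omega)]
    exact ⟨this, rfl⟩

section Excess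

variable {n : ℕ} (b : Fin n → ZMod (n + 1))

def excess (t : ℕ) : ℤ := ∑ j ∈ range t, (#{i | b i = j} : ℤ) - t

theorem excess_add (u : ℕ) {k : ℕ} (hk : k ≤ n + 1) :
    excess b (u + k) = excess b u + #{i | (-(u : ZMod (n + 1)) + b i).val < k} - k := by
  simp only [excess, ZMod.card_filter_val_lt_eq_sum _ hk, sum_range_add, neg_add_eq_iff_eq_add]
  push_cast
  ring

theorem excess_add_period (t : ℕ) : excess b (t + (n + 1)) = excess b t - 1 := by
  rw [excess_add b t le_rfl, filter_true_of_mem fun i _ => ZMod.val_lt _, card_univ,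
    Fintype.card_fin]
  push_cast
  ring

theorem isParkingFunctionZMod_neg_vadd_iff (u : ℕ) :
    IsParkingFunctionZMod n (-(u : ZMod (n + 1)) +ᵥ b) ↔
      ∀ k < n + 1, excess b u ≤ excess b (u + k) := by
  simp only [IsParkingFunctionZMod, Pi.vadd_apply, vadd_eq_add, Nat.lt_succ_iff]
  refine forall₂_congr fun k hk => ?_
  rw [excess_add b u (by omega)]
  omega

theorem existsUnique_vadd_isParkingFunctionZMod :
    ∃! c : ZMod (n + 1), IsParkingFunctionZMod n (c +ᵥ b) := by
  obtain ⟨u, ⟨-, hu⟩, huniq⟩ :=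
    existsUnique_forall_le_add_of_add_period n.succ_pos (excess_add_period b)
  refine ⟨-(u : ZMod (n + 1)), (isParkingFunctionZMod_neg_vadd_iff b u).2 hu, fun c hc => ?_⟩
  have hc' : c = -((-c).val : ZMod (n + 1)) := by simp
  rw [hc', isParkingFunctionZMod_neg_vadd_iff] at hc
  rw [hc', huniq _ ⟨ZMod.val_lt _, hc⟩]

end Excess

theorem count_parking_functions (n : ℕ) :
    {a : Fin n → ℕ | IsParkingFunction n a}.ncard = (n + 1) ^ (n - 1) := by
  have hcount := Nat.card_mul_card_eq_of_existsUnique_vadd_mem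
    (S := {b : Fin n → ZMod (n + 1) | IsParkingFunctionZMod n b})
    existsUnique_vadd_isParkingFunctionZMod
  rw [Nat.card_zmod, Nat.card_fun, Nat.card_zmod, Nat.card_fin] at hcount
  have hinj : Function.Injective fun (b : Fin n → ZMod (n + 1)) i => (b i).val + 1 :=
    fun b b' h => funext fun i => ZMod.val_injective _ (by simpa using congrFun h i)
  rw [setOf_isParkingFunction_eq_image, Set.ncard_image_of_injective _ hinj,
    ← Nat.card_coe_set_eq]
  refine Nat.eq_of_mul_eq_mul_right n.succ_pos (hcount.trans ?_)
  cases n <;> simp [pow_succ]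
end

section
/- For b = (b_1,...,b_n) with each b_i a positive integer, every b-parking function (β_1,...,β_n) satisfies, for every nonempty subset I of {1,...,n}, the inequality ∑_{i∈I} β_i ≤ ∑_{j=1}^n min(j, |I|) · b_{n-j+1}. -/
/-- Partial sum `S_i = b_1 + ⋯ + b_i`, where `b j` denotes `b_{j+1}` (0-indexed). -/
def Spart (b : ℕ → ℕ) (i : ℕ) : ℕ := ∑ j ∈ Finset.range i, b j

/-- A `b`-parking function: a sequence of positive integers whose nondecreasing
rearrangement `β'₁ ≤ ⋯ ≤ β'ₙ` satisfies `β'ᵢ ≤ b_1 + ⋯ + b_i`. -/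
def IsBParkingFunction (n : ℕ) (b : ℕ → ℕ) (β : Fin n → ℕ) : Prop :=
  (∀ i, 1 ≤ β i) ∧ ∃ σ : Equiv.Perm (Fin n),
    Monotone (β ∘ σ) ∧ ∀ i : Fin n, β (σ i) ≤ Spart b ((i : ℕ) + 1)

/-!
Sort `β` by the permutation `σ` of the definition: `∑_{i ∈ I} β_i = ∑_{j ∈ J} β_{σ j}` with
`J = σ⁻¹ I`, and each summand is at most `S_{j+1} = ∑_{l ≤ j} b_l`. Exchanging the sums, `b_l` is
counted once for each `j ∈ J` with `l ≤ j`, i.e. at most `min (n - l) |I|` times; reversing the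
index `l ↦ n - 1 - l` turns `∑_l min (n - l) |I| · b_l` into the right-hand side.
-/

open Finset

lemma Spart_succ_eq_sum_ite {n : ℕ} (b : ℕ → ℕ) (j : Fin n) :
    Spart b (j + 1) = ∑ l ∈ range n, if l ≤ j then b l else 0 := by
  rw [Spart, sum_ite, sum_const_zero, add_zero]
  congr 1
  ext l
  simp only [mem_range, mem_filter]
  omega

lemma sum_Spart_succ_eq {n : ℕ} (b : ℕ → ℕ) (J : Finset (Fin n)) :
    ∑ j ∈ J, Spart b (j + 1) = ∑ l ∈ range n, #(J.filter fun j : Fin n => l ≤ j) * b l := by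
  simp_rw [Spart_succ_eq_sum_ite, sum_comm (s := J), card_filter, sum_mul, ite_mul, one_mul,
    zero_mul]

lemma card_filter_le_val_le {n : ℕ} (J : Finset (Fin n)) (l : ℕ) :
    #(J.filter fun j : Fin n => l ≤ j) ≤ n - l :=
  calc #(J.filter fun j : Fin n => l ≤ j) ≤ #(Ico l n) :=
        card_le_card_of_injOn Fin.val (fun j hj => mem_Ico.2 ⟨(mem_filter.1 hj).2, j.isLt⟩)
          Fin.val_injective.injOn
    _ = n - l := Nat.card_Ico l n

lemma sum_range_min_mul_reflect (n k : ℕ) (b : ℕ → ℕ) :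
    ∑ j ∈ range n, min (j + 1) k * b (n - 1 - j) = ∑ l ∈ range n, min (n - l) k * b l := by
  rw [← sum_range_reflect]
  refine sum_congr rfl fun l hl => ?_
  rw [mem_range] at hl
  congr 2 <;> omega

lemma sum_Spart_succ_le {n : ℕ} (b : ℕ → ℕ) (J : Finset (Fin n)) :
    ∑ j ∈ J, Spart b (j + 1) ≤ ∑ j ∈ range n, min (j + 1) #J * b (n - 1 - j) := by
  rw [sum_Spart_succ_eq, sum_range_min_mul_reflect]
  gcongr with l
  exact le_min (card_filter_le_val_le J l) (card_filter_le _ _)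

theorem bparking_subset_inequality_general (n : ℕ) (b : ℕ → ℕ)
    (β : Fin n → ℕ) (hβ : IsBParkingFunction n b β)
    (I : Finset (Fin n)) :
    ∑ i ∈ I, β i ≤ ∑ j ∈ Finset.range n, min (j + 1) I.card * b (n - 1 - j) := by
  obtain ⟨-, σ, -, hσ⟩ := hβ
  set J := I.map σ.symm.toEmbedding
  calc ∑ i ∈ I, β i = ∑ j ∈ J, β (σ j) := by simp [J]
    _ ≤ ∑ j ∈ J, Spart b (j + 1) := sum_le_sum fun j _ => hσ j
    _ ≤ _ := by simpa [J] using sum_Spart_succ_le b J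

/-- Every `b`-parking function satisfies, for every nonempty `I ⊆ [n]`,
`∑_{i∈I} β_i ≤ ∑_{j=1}^n min(j,|I|)·b_{n-j+1}`. -/
theorem bparking_subset_inequality (n : ℕ) (b : ℕ → ℕ) (hb : ∀ j < n, 1 ≤ b j)
    (β : Fin n → ℕ) (hβ : IsBParkingFunction n b β)
    (I : Finset (Fin n)) (hI : I.Nonempty) :
    ∑ i ∈ I, β i ≤ ∑ j ∈ Finset.range n, min (j + 1) I.card * b (n - 1 - j) :=
  bparking_subset_inequality_general n b β hβ I
end

section
/- For b = (b_1,...,b_n) ∈ ℤ_{>0}^n with b_1 = 1, the number of vertices of the b-parking-function polytope X_n(b) is n!·(1/1! + 1/2! + ... + 1/n!); equivalently, the number of distinct points of the form π(y_k) for π ∈ S_n and 0 ≤ k ≤ n equals n!·∑_{j=1}^{n} 1/j!. -/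
open Nat

/-!
For `k ≥ 1` the coordinates of `y_k` equal to `1` are exactly the first `k`: the remaining ones,
`S_{k+1} < ⋯ < S_n`, are pairwise distinct and exceed `S_1 = b_1 = 1`. So a permutation fixes `y_k`
iff it fixes every coordinate beyond the `k`-th, the stabiliser of `y_k` is a copy of `S_k`, and by
orbit–stabiliser the orbit of `y_k` has `n!/k!` points. Orbits of different `y_k` are disjoint,
being told apart by the number of coordinates equal to `1`, and `y_0 = y_1` contributes nothing new.
-/

open Equiv Function

section Rearrangement

variable {α β : Type*} [Finite α]

theorem card_range_comp_perm_mul_card_stabilizer (f : α → β) :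
    Nat.card (Set.range fun σ : Perm α => f ∘ σ) * Nat.card {σ : Perm α // f ∘ σ = f}
      = (Nat.card α)! := by
  have horbit : (Set.range fun σ : Perm α => f ∘ σ) = MulAction.orbit (Perm α)ᵈᵐᵃ f := by
    ext v
    exact ⟨fun ⟨σ, hσ⟩ => ⟨DomMulAct.mk σ, hσ⟩, fun ⟨σ, hσ⟩ => ⟨DomMulAct.mk.symm σ, hσ⟩⟩
  have hstab : {σ : Perm α // f ∘ σ = f} ≃ MulAction.stabilizer (Perm α)ᵈᵐᵃ f :=
    subtypeEquiv DomMulAct.mk fun _ => DomMulAct.mem_stabilizer_iff.symm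
  rw [horbit, Nat.card_coe_set_eq, ← MulAction.index_stabilizer, Nat.card_congr hstab, mul_comm,
    Subgroup.card_mul_index, ← Nat.card_congr (DomMulAct.mk (M := Perm α)), Nat.card_perm]

theorem card_stabilizer_of_injOn (f : α → β) (c : β) (hf : Set.InjOn f {a | f a ≠ c}) :
    Nat.card {σ : Perm α // f ∘ σ = f} = (Nat.card {a // f a = c})! := by
  classical
  have hfix (σ : Perm α) : f ∘ σ = f ↔ ∀ a, ¬ f a = c → σ a = a := by
    refine ⟨fun h a ha => ?_, fun h => funext fun a => ?_⟩
    · have h' : f (σ a) = f a := congrFun h a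
      exact hf (show f (σ a) ≠ c by rwa [h']) ha h'
    · by_cases ha : f a = c
      · by_contra hne
        have hσa : σ (σ a) = σ a := h _ (by rwa [comp_apply, ha] at hne)
        exact hne (by rw [comp_apply, σ.injective hσa])
      · rw [comp_apply, h a ha]
  rw [Nat.card_congr (subtypeEquivRight hfix), ← Nat.card_congr (Perm.subtypeEquivSubtypePerm _),
    Nat.card_perm]

end Rearrangement

theorem Spart_succ (b : ℕ → ℕ) (i : ℕ) : Spart b (i + 1) = Spart b i + b i :=
  Finset.sum_range_succ b i

section PartialSums

variable {b : ℕ → ℕ} {n : ℕ}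

theorem Spart_strictMonoOn (hb : ∀ j < n, 1 ≤ b j) : StrictMonoOn (Spart b) (Set.Iic n) :=
  strictMonoOn_Iic_of_lt_succ fun m hm => by
    rw [Order.succ_eq_add_one, Spart_succ]
    have := hb m hm
    omega

theorem Spart_one (hb1 : b 0 = 1) : Spart b 1 = 1 := by
  simp [Spart, hb1]

theorem one_lt_Spart (hb : ∀ j < n, 1 ≤ b j) (hb1 : b 0 = 1) {i : ℕ} (h2 : 2 ≤ i) (hin : i ≤ n) :
    1 < Spart b i :=
  Spart_one hb1 ▸ Spart_strictMonoOn hb (Set.mem_Iic.2 (by omega)) hin (by omega)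

end PartialSums

/-- The paper's `y_k`, with coordinates indexed from `0`. -/
def yVec (b : ℕ → ℕ) (n k : ℕ) : Fin n → ℕ :=
  fun i => if (i : ℕ) < k then 1 else Spart b (i + 1)

section yVec

variable {b : ℕ → ℕ} {n : ℕ}

theorem yVec_zero (hb1 : b 0 = 1) : yVec b n 0 = yVec b n 1 := by
  funext i
  by_cases hi : (i : ℕ) = 0 <;> simp [yVec, hi, Spart_one hb1]

theorem yVec_eq_one_iff (hb : ∀ j < n, 1 ≤ b j) (hb1 : b 0 = 1) {k : ℕ} (hk : 1 ≤ k)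
    (i : Fin n) : yVec b n k i = 1 ↔ (i : ℕ) < k := by
  by_cases hik : (i : ℕ) < k
  · simp [yVec, hik]
  · simp only [yVec, hik, if_false, iff_false]
    exact (one_lt_Spart hb hb1 (by omega) i.isLt).ne'

theorem yVec_injOn (hb : ∀ j < n, 1 ≤ b j) (k : ℕ) :
    Set.InjOn (yVec b n k) {i | yVec b n k i ≠ 1} := by
  intro i hi j hj hij
  have hik : ¬ (i : ℕ) < k := fun h => hi (by simp [yVec, h])
  have hjk : ¬ (j : ℕ) < k := fun h => hj (by simp [yVec, h])
  simp only [yVec, hik, hjk, if_false] at hij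
  have := (Spart_strictMonoOn hb).injOn (Set.mem_Iic.2 i.isLt) (Set.mem_Iic.2 j.isLt) hij
  exact Fin.ext (by omega)

theorem card_yVec_eq_one (hb : ∀ j < n, 1 ≤ b j) (hb1 : b 0 = 1) {k : ℕ} (hk : 1 ≤ k)
    (hkn : k ≤ n) : Nat.card {i // yVec b n k i = 1} = k := by
  rw [Nat.card_congr (subtypeEquivRight (yVec_eq_one_iff hb hb1 hk)),
    Nat.card_eq_fintype_card, Fintype.card_fin_lt_of_le hkn]

theorem card_range_yVec_comp (hb : ∀ j < n, 1 ≤ b j) (hb1 : b 0 = 1) {k : ℕ} (hk : 1 ≤ k)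
    (hkn : k ≤ n) :
    Nat.card (Set.range fun π : Perm (Fin n) => yVec b n k ∘ π) = n ! / k ! := by
  have h := card_range_comp_perm_mul_card_stabilizer (yVec b n k)
  rw [card_stabilizer_of_injOn _ 1 (yVec_injOn hb k), card_yVec_eq_one hb hb1 hk hkn,
    Nat.card_fin] at h
  exact (Nat.div_eq_of_eq_mul_left (Nat.factorial_pos k) h.symm).symm

theorem card_eq_one_of_mem_range_yVec_comp (hb : ∀ j < n, 1 ≤ b j) (hb1 : b 0 = 1) {k : ℕ}
    (hk : 1 ≤ k) (hkn : k ≤ n) {v : Fin n → ℕ}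
    (hv : v ∈ Set.range fun π : Perm (Fin n) => yVec b n k ∘ π) : Nat.card {i // v i = 1} = k := by
  obtain ⟨π, rfl⟩ := hv
  exact (Nat.card_congr (π.subtypeEquiv fun _ => Iff.rfl)).trans (card_yVec_eq_one hb hb1 hk hkn)

theorem setOf_exists_yVec_comp_eq_biUnion (hn : 1 ≤ n) (hb1 : b 0 = 1) :
    {v | ∃ (π : Perm (Fin n)) (k : ℕ), k ≤ n ∧ v = yVec b n k ∘ π}
      = ⋃ k ∈ (Finset.Icc 1 n : Set ℕ), Set.range fun π : Perm (Fin n) => yVec b n k ∘ π := by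
  ext v
  simp only [Set.mem_ofPred_eq, Set.mem_iUnion, Set.mem_range, Finset.coe_Icc, Set.mem_Icc]
  constructor
  · rintro ⟨π, k, hkn, rfl⟩
    rcases Nat.eq_zero_or_pos k with rfl | hk
    · exact ⟨1, ⟨le_rfl, hn⟩, π, by rw [yVec_zero hb1]⟩
    · exact ⟨k, ⟨hk, hkn⟩, π, rfl⟩
  · rintro ⟨k, ⟨-, hkn⟩, π, rfl⟩
    exact ⟨π, k, hkn, rfl⟩

theorem pairwiseDisjoint_range_yVec_comp (hb : ∀ j < n, 1 ≤ b j) (hb1 : b 0 = 1) :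
    (Finset.Icc 1 n : Set ℕ).PairwiseDisjoint
      fun k => Set.range fun π : Perm (Fin n) => yVec b n k ∘ π := by
  intro k hk k' hk' hne
  simp only [Finset.coe_Icc, Set.mem_Icc] at hk hk'
  refine Set.disjoint_left.2 fun v hv hv' => hne ?_
  rw [← card_eq_one_of_mem_range_yVec_comp hb hb1 hk.1 hk.2 hv,
    card_eq_one_of_mem_range_yVec_comp hb hb1 hk'.1 hk'.2 hv']

end yVec

/-- When `b_1 = 1`, the number of distinct points `π(y_k)` for `π ∈ S_n`,
`0 ≤ k ≤ n` (the vertices of `X_n(b)`) is `n!·(1/1! + ⋯ + 1/n!)`. -/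
theorem vertex_count_b1_eq_one (n : ℕ) (hn : 1 ≤ n) (b : ℕ → ℕ)
    (hb : ∀ j < n, 1 ≤ b j) (hb1 : b 0 = 1) :
    {v : Fin n → ℕ | ∃ (π : Equiv.Perm (Fin n)) (k : ℕ), k ≤ n ∧
        v = fun i => if ((π i : Fin n) : ℕ) < k then 1 else Spart b (((π i : Fin n) : ℕ) + 1)}.ncard
      = ∑ j ∈ Finset.Icc 1 n, n ! / j ! := by
  change {v | ∃ (π : Perm (Fin n)) (k : ℕ), k ≤ n ∧ v = yVec b n k ∘ π}.ncard = _
  rw [setOf_exists_yVec_comp_eq_biUnion hn hb1,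
    Set.Finite.ncard_biUnion (Finset.finite_toSet _) (fun _ _ => Set.finite_range _)
      (pairwiseDisjoint_range_yVec_comp hb hb1),
    finsum_mem_coe_finset]
  refine Finset.sum_congr rfl fun k hk => ?_
  rw [Finset.mem_Icc] at hk
  rw [← Nat.card_coe_set_eq, card_range_yVec_comp hb hb1 hk.1 hk.2]
end

section
/- The set function f_b : 2^{[n]} → ℤ defined by f_b(∅) = 0 and f_b(I) = -|I| + ∑_{j=1}^{n} min(|I|, j) · b_{n-j+1} for nonempty I is nondecreasing and submodular, i.e., for all X ⊆ Y ⊆ [n] and z ∈ [n] \ Y, f_b(X ∪ {z}) - f_b(X) ≥ f_b(Y ∪ {z}) - f_b(Y). -/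
/-- The set function `f_b(I) = -|I| + ∑_{j=1}^n min(|I|,j)·b_{n-j+1}`
(which takes the value `0` at `∅`). -/
def fSub (n : ℕ) (b : ℕ → ℕ) (I : Finset (Fin n)) : ℤ :=
  -(I.card : ℤ) + ∑ j ∈ Finset.range n, (min I.card (j + 1) : ℤ) * (b (n - 1 - j) : ℤ)

/-!
`f_b(I)` depends only on `k = |I|`, and raising `k` to `k + 1` adds `-1 + b_1 + ⋯ + b_{n-k}`.
These increments shrink as `k` grows, which gives submodularity, and they are nonnegative
for `k < n` because the `b_i` are positive, which gives monotonicity.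
-/

open Finset

theorem card_union_singleton_of_notMem {α : Type*} [DecidableEq α] {s : Finset α} {a : α}
    (h : a ∉ s) : (s ∪ {a}).card = s.card + 1 := by
  rw [union_comm, ← insert_eq, card_insert_of_notMem h]

theorem comp_card_union_singleton_sub_le {α β : Type*} [DecidableEq α]
    [AddCommGroup β] [PartialOrder β] {φ : ℕ → β} (hφ : Antitone fun k ↦ φ (k + 1) - φ k)
    {X Y : Finset α} (hXY : X ⊆ Y) {z : α} (hz : z ∉ Y) :
    φ (Y ∪ {z}).card - φ Y.card ≤ φ (X ∪ {z}).card - φ X.card := by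
  rw [card_union_singleton_of_notMem hz,
    card_union_singleton_of_notMem fun hzX ↦ hz (hXY hzX)]
  exact hφ (card_le_card hXY)

def fSubOfCard (n : ℕ) (b : ℕ → ℕ) (k : ℕ) : ℤ :=
  -(k : ℤ) + ∑ j ∈ Finset.range n, (min k (j + 1) : ℤ) * (b (n - 1 - j) : ℤ)

theorem fSub_eq_fSubOfCard (n : ℕ) (b : ℕ → ℕ) (I : Finset (Fin n)) :
    fSub n b I = fSubOfCard n b I.card := rfl

theorem fSubOfCard_zero (n : ℕ) (b : ℕ → ℕ) : fSubOfCard n b 0 = 0 := by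
  rw [fSubOfCard,
    sum_eq_zero fun j _ ↦ by rw [Nat.cast_zero, min_eq_left (by positivity), zero_mul]]
  simp

theorem fSubOfCard_succ_sub (n : ℕ) (b : ℕ → ℕ) (k : ℕ) :
    fSubOfCard n b (k + 1) - fSubOfCard n b k = -1 + ∑ j ∈ Ico k n, (b (n - 1 - j) : ℤ) := by
  have hstep (j : ℕ) : min ((k + 1 : ℕ) : ℤ) (j + 1) * b (n - 1 - j) -
      min (k : ℤ) (j + 1) * b (n - 1 - j) = if k ≤ j then (b (n - 1 - j) : ℤ) else 0 := by
    rw [← sub_mul]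
    split_ifs
    · rw [show min ((k + 1 : ℕ) : ℤ) (j + 1) - min (k : ℤ) (j + 1) = 1 by omega, one_mul]
    · rw [show min ((k + 1 : ℕ) : ℤ) (j + 1) - min (k : ℤ) (j + 1) = 0 by omega, zero_mul]
  have htail : ∑ j ∈ range n, (if k ≤ j then (b (n - 1 - j) : ℤ) else 0) =
      ∑ j ∈ Ico k n, (b (n - 1 - j) : ℤ) := by
    rw [← sum_filter, range_eq_Ico, Ico_filter_le, max_eq_right (Nat.zero_le k)]
  rw [fSubOfCard, fSubOfCard, ← htail, ← sum_congr rfl fun j _ ↦ hstep j, sum_sub_distrib]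
  push_cast
  ring

theorem fSubOfCard_succ_sub_antitone (n : ℕ) (b : ℕ → ℕ) :
    Antitone fun k ↦ fSubOfCard n b (k + 1) - fSubOfCard n b k := by
  intro k m hkm
  simp only [fSubOfCard_succ_sub]
  gcongr

theorem fSubOfCard_monotoneOn (n : ℕ) (b : ℕ → ℕ) (hb : ∀ j < n, 1 ≤ b j) :
    MonotoneOn (fSubOfCard n b) (Set.Iic n) := by
  refine monotoneOn_of_le_succ Set.ordConnected_Iic fun k _ _ hk ↦ ?_
  rw [Order.succ_eq_add_one, Set.mem_Iic] at *
  rw [← sub_nonneg, fSubOfCard_succ_sub, sum_eq_sum_Ico_succ_bot hk]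
  have hbk : 1 ≤ b (n - 1 - k) := hb _ (by omega)
  have hrest : 0 ≤ ∑ j ∈ Ico (k + 1) n, (b (n - 1 - j) : ℤ) := by positivity
  omega

/-- `f_b` vanishes at `∅`, is nondecreasing, and is submodular:
for `X ⊆ Y ⊆ [n]` and `z ∈ [n] \ Y`,
`f_b(X ∪ {z}) - f_b(X) ≥ f_b(Y ∪ {z}) - f_b(Y)`. -/
theorem fSub_nondecreasing_submodular (n : ℕ) (b : ℕ → ℕ) (hb : ∀ j < n, 1 ≤ b j) :
    fSub n b ∅ = 0 ∧
    (∀ X Y : Finset (Fin n), X ⊆ Y → fSub n b X ≤ fSub n b Y) ∧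
    (∀ X Y : Finset (Fin n), X ⊆ Y → ∀ z : Fin n, z ∉ Y →
      fSub n b (Y ∪ {z}) - fSub n b Y ≤ fSub n b (X ∪ {z}) - fSub n b X) := by
  have hcard (I : Finset (Fin n)) : I.card ∈ Set.Iic n :=
    (card_le_univ I).trans_eq (Fintype.card_fin n)
  simp only [fSub_eq_fSubOfCard]
  refine ⟨fSubOfCard_zero n b, fun X Y hXY ↦ ?_, fun X Y hXY z hz ↦ ?_⟩
  · exact fSubOfCard_monotoneOn n b hb (hcard X) (hcard Y) (card_le_card hXY)
  · exact comp_card_union_singleton_sub_le (fSubOfCard_succ_sub_antitone n b) hXY hz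
end

section
/- In the signed Minkowski sum decomposition of the lifted b-parking-function polytope, the coefficient y_I for I ⊆ [n+1] with n+1 ∈ I and |I| ≥ 3 is given by y_I = ∑_{j=0}^{|I|-3} (-1)^{|I|+j-1} C(|I|-3, j) b_{j+2}; equivalently, for m = |I| ≥ 3, if z_J = |J| for n+1 ∉ J and z_J = S_1 + ... + S_{|J|-1} for n+1 ∈ J (with S_ℓ = b_1+...+b_ℓ, z_∅ = 0), then ∑_{J ⊆ I} (-1)^{|I|-|J|} z_J = (-1)^{m-1} ∑_{i=0}^{m-3} (-1)^i C(m-3,i) b_{i+2}. -/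
/-- The submodular parameters `z_J`: `z_J = |J|` if `n+1 ∉ J`, and
`z_J = S_1 + ⋯ + S_{|J|-1}` if `n+1 ∈ J` (with `z_∅ = 0`). -/
def zParam (n : ℕ) (b : ℕ → ℕ) (J : Finset (Fin (n + 1))) : ℤ :=
  if Fin.last n ∈ J then ∑ ℓ ∈ Finset.Icc 1 (J.card - 1), (Spart b ℓ : ℤ)
  else (J.card : ℤ)


/-!
Removing `n+1` from `I`, the transform `y_I` becomes the `(|I|-1)`-th forward difference at `0`
of `k ↦ z_{J ∪ {n+1}} - z_J = (S_1 + ⋯ + S_k) - k` (a function of `k = |J|` only). The second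
difference of this function is `k ↦ b_{k+2}`, so `y_I` is the `(|I|-3)`-th forward difference of
`k ↦ b_{k+2}` at `0`, which Newton's formula expands into the claimed alternating sum.
-/

open Finset fwdDiff

section AlternatingSums

variable {R : Type*} [CommRing R]

lemma neg_one_pow_sub_of_le {m n : ℕ} (h : m ≤ n) :
    (-1 : R) ^ (n - m) = (-1) ^ n * (-1) ^ m := by
  rw [← pow_add]
  simp [show n + m = n - m + 2 * m by lia, pow_add]

theorem fwdDiff_iter_eq_neg_one_pow_mul_sum (f : ℕ → R) (n : ℕ) :
    Δ_[1] ^[n] f 0 = (-1) ^ n * ∑ k ∈ range (n + 1), (-1) ^ k * (n.choose k : R) * f k := by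
  rw [fwdDiff_iter_eq_sum_shift, mul_sum]
  refine sum_congr rfl fun k hk => ?_
  rw [neg_one_pow_sub_of_le (Nat.lt_succ_iff.mp (mem_range.mp hk)) (R := ℤ)]
  simp only [smul_eq_mul, mul_one, zero_add, zsmul_eq_mul]
  push_cast
  ring

theorem sum_powerset_neg_one_pow_mul_card {α : Type*} (s : Finset α) (f : ℕ → R) :
    ∑ J ∈ s.powerset, (-1 : R) ^ (#s - #J) * f #J = Δ_[1] ^[#s] f 0 := by
  rw [sum_powerset_apply_card (fun k => (-1 : R) ^ (#s - k) * f k), fwdDiff_iter_eq_sum_shift]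
  refine sum_congr rfl fun k _ => ?_
  simp only [nsmul_eq_mul, smul_eq_mul, mul_one, zero_add, zsmul_eq_mul]
  push_cast
  ring

theorem sum_powerset_insert_neg_one_pow_mul {α : Type*} [DecidableEq α] {s : Finset α} {a : α}
    (ha : a ∉ s) (F : Finset α → R) :
    ∑ J ∈ (insert a s).powerset, (-1 : R) ^ (#(insert a s) - #J) * F J
      = ∑ J ∈ s.powerset, (-1 : R) ^ (#s - #J) * (F (insert a J) - F J) := by
  rw [sum_powerset_insert ha, ← sum_add_distrib]
  refine sum_congr rfl fun J hJ => ?_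
  have hJs : #J ≤ #s := card_le_card (mem_powerset.mp hJ)
  have haJ : a ∉ J := fun h => ha (mem_powerset.mp hJ h)
  rw [card_insert_of_notMem ha, card_insert_of_notMem haJ, Nat.add_sub_add_right,
    Nat.sub_add_comm hJs, pow_succ]
  ring

end AlternatingSums

def zGap (b : ℕ → ℕ) (k : ℕ) : ℤ := ∑ ℓ ∈ Icc 1 k, (Spart b ℓ : ℤ) - k

lemma zParam_insert_last_sub {n : ℕ} (b : ℕ → ℕ) {J : Finset (Fin (n + 1))}
    (hJ : Fin.last n ∉ J) :
    zParam n b (insert (Fin.last n) J) - zParam n b J = zGap b #J := by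
  simp [zParam, zGap, hJ, card_insert_of_notMem hJ]

lemma fwdDiff_iter_two_zGap (b : ℕ → ℕ) : Δ_[1] ^[2] (zGap b) = fun k => (b (k + 1) : ℤ) := by
  ext k
  simp only [Function.iterate_succ_apply, Function.iterate_zero_apply, fwdDiff, zGap,
    sum_Icc_succ_top (show 1 ≤ k + 1 + 1 by lia), sum_Icc_succ_top (show 1 ≤ k + 1 by lia),
    Spart, sum_range_succ]
  push_cast
  ring

/-- For `I ⊆ [n+1]` with `n+1 ∈ I` and `m = |I| ≥ 3`, the inclusion-exclusion
transform of the `z_J` is `y_I = (-1)^{m-1} ∑_{i=0}^{m-3} (-1)^i C(m-3,i) b_{i+2}`. -/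
theorem minkowski_coefficient (n : ℕ) (b : ℕ → ℕ) (I : Finset (Fin (n + 1)))
    (hI : Fin.last n ∈ I) (hcard : 3 ≤ I.card) :
    ∑ J ∈ I.powerset, (-1 : ℤ) ^ (I.card - J.card) * zParam n b J
      = (-1 : ℤ) ^ (I.card - 1) *
        ∑ i ∈ Finset.range (I.card - 2),
          (-1 : ℤ) ^ i * ((I.card - 3).choose i : ℤ) * (b (i + 1) : ℤ) := by
  obtain ⟨M, hM⟩ : ∃ M, #(I.erase (Fin.last n)) = M + 2 :=
    ⟨#I - 3, by rw [card_erase_of_mem hI]; lia⟩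
  have hIcard : #I = M + 3 := by rw [← card_erase_add_one hI, hM]
  calc ∑ J ∈ I.powerset, (-1 : ℤ) ^ (#I - #J) * zParam n b J
      = ∑ J ∈ (I.erase (Fin.last n)).powerset, (-1 : ℤ) ^ (#(I.erase (Fin.last n)) - #J) *
          (zParam n b (insert (Fin.last n) J) - zParam n b J) := by
        conv_lhs => rw [← insert_erase hI]
        exact sum_powerset_insert_neg_one_pow_mul (notMem_erase _ _) _
    _ = ∑ J ∈ (I.erase (Fin.last n)).powerset,
          (-1 : ℤ) ^ (#(I.erase (Fin.last n)) - #J) * zGap b #J := by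
        refine sum_congr rfl fun J hJ => ?_
        rw [zParam_insert_last_sub b fun h => notMem_erase _ I (mem_powerset.mp hJ h)]
    _ = Δ_[1] ^[M] (Δ_[1] ^[2] (zGap b)) 0 := by
        rw [sum_powerset_neg_one_pow_mul_card, hM, Function.iterate_add_apply]
    _ = _ := by
        rw [fwdDiff_iter_two_zGap, fwdDiff_iter_eq_neg_one_pow_mul_sum, hIcard]
        simp [pow_add]
end

section
/- The lifted b-parking-function polytope X̄_n(b) = { (x_1,...,x_n, B - ∑x_i) : x ∈ X_n(b) }, where B = ∑_{k=1}^n S_k, is a generalized permutahedron: all of its edges are parallel to differences e_i - e_j of standard basis vectors of ℝ^{n+1}. -/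
/-- The `b`-parking-function polytope. -/
noncomputable def bpfPolytope (n : ℕ) (b : ℕ → ℕ) : Set (Fin n → ℝ) :=
  convexHull ℝ {x | ∃ β : Fin n → ℕ, IsBParkingFunction n b β ∧ x = fun i => (β i : ℝ)}

/-- The lifted `b`-parking-function polytope
`X̄_n(b) = {(x, B - ∑ xᵢ) : x ∈ X_n(b)}` with `B = ∑_{k=1}^n S_k`. -/
noncomputable def liftedPolytope (n : ℕ) (b : ℕ → ℕ) : Set (Fin (n + 1) → ℝ) :=
  (fun x : Fin n → ℝ =>
    Fin.snoc x ((∑ k ∈ Finset.Icc 1 n, (Spart b k : ℝ)) - ∑ i, x i)) '' bpfPolytope n b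

/-!
An edge `[v, w]` of the lifted polytope joins the lifts of two parking functions `β ≠ γ`, say
`β i < γ i`, and is exposed by a functional `l`. If `w - v` were parallel to no `e_p - e_q`, then
`l` would decrease strictly along every move `c (e_p - e_q)` from `v` or `w` to another lifted
parking function. Lowering `γ i` gives `l (e_i - e_{n+1}) > 0`, so `β i` cannot be raised, which
happens only when `β i = S_t` for a threshold `t` at which `β` is tight. Since `γ` has at least `t`
entries `≤ S_t`, and `i` is not among them, some `j` has `γ j ≤ β i < β j`. Swapping `i` and `j`
in `β` and in `γ` moves along `e_i - e_j` with coefficients of opposite signs, so `l (e_i - e_j)`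
would be both negative and positive.
-/

open Finset

lemma Spart_mono (b : ℕ → ℕ) : Monotone (Spart b) := fun _ _ h =>
  sum_le_sum_of_subset (range_subset_range.2 h)

lemma isBParkingFunction_iff_card_le {n : ℕ} {b : ℕ → ℕ} {β : Fin n → ℕ} :
    IsBParkingFunction n b β ↔ (∀ i, 1 ≤ β i) ∧ ∀ t ≤ n, t ≤ #{k | β k ≤ Spart b t} := by
  refine and_congr_right fun _ => ⟨fun ⟨σ, _, hσ⟩ t ht => ?_, fun h => ?_⟩
  · have hsub : ({m : Fin n | (m : ℕ) < t} : Finset _).map σ.toEmbedding ⊆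
        ({k | β k ≤ Spart b t} : Finset _) := by
      simp only [subset_iff, mem_map_equiv, mem_filter_univ]
      intro k hk
      simpa using (hσ _).trans (Spart_mono b hk)
    simpa [Fin.card_filter_val_lt, ht] using card_le_card hsub
  · refine ⟨Tuple.sort β, Tuple.monotone_sort β, fun i => ?_⟩
    by_contra! hlt
    have hsub : ({k | β k ≤ Spart b (i + 1)} : Finset _) ⊆
        ({m : Fin n | (m : ℕ) < i} : Finset _).map (Tuple.sort β).toEmbedding := by
      simp only [subset_iff, mem_map_equiv, mem_filter_univ]
      intro k hk
      by_contra! hik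
      have := Tuple.monotone_sort β (show i ≤ (Tuple.sort β).symm k from hik)
      simp only [Function.comp_apply, Equiv.apply_symm_apply] at this
      omega
    have := (h (i + 1) i.isLt).trans (card_le_card hsub)
    rw [card_map, Fin.card_filter_val_lt] at this
    omega

namespace IsBParkingFunction

variable {n : ℕ} {b : ℕ → ℕ} {β γ : Fin n → ℕ}

lemma comp_perm (h : IsBParkingFunction n b β) (τ : Equiv.Perm (Fin n)) :
    IsBParkingFunction n b (β ∘ τ) := by
  obtain ⟨h1, σ, hmono, hσ⟩ := h
  exact ⟨fun i => h1 (τ i), σ.trans τ.symm, by simpa [Function.comp_def] using hmono,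
    by simpa using hσ⟩

lemma update_pred (h : IsBParkingFunction n b β) {i : Fin n} (hi : 2 ≤ β i) :
    IsBParkingFunction n b (Function.update β i (β i - 1)) := by
  rw [isBParkingFunction_iff_card_le] at h ⊢
  refine ⟨fun k => ?_, fun t ht => (h.2 t ht).trans (card_le_card ?_)⟩
  · rcases eq_or_ne k i with rfl | hk
    · simp; omega
    · simpa [hk] using h.1 k
  · intro k
    rcases eq_or_ne k i with rfl | hk <;> simp +contextual [*]
    omega

lemma exists_le_lt_of_not_update_succ (hβ : IsBParkingFunction n b β)
    (hγ : IsBParkingFunction n b γ) {i : Fin n} (hi : β i < γ i)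
    (hsucc : ¬ IsBParkingFunction n b (Function.update β i (β i + 1))) :
    ∃ j, γ j ≤ β i ∧ β i < β j := by
  rw [isBParkingFunction_iff_card_le] at hβ hγ hsucc
  obtain ⟨t, ht, hcard⟩ : ∃ t ≤ n,
      #{k | Function.update β i (β i + 1) k ≤ Spart b t} < t := by
    by_contra! hall
    refine hsucc ⟨fun k => ?_, hall⟩
    rcases eq_or_ne k i with rfl | hk
    · simp
    · simpa [hk] using hβ.1 k
  set β' := Function.update β i (β i + 1)
  have hβ' : ∀ k ≠ i, β' k = β k := fun k hk => Function.update_of_ne hk _ _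
  have hcard_le : #{k | β k ≤ Spart b t} ≤ #{k | β' k ≤ Spart b t} + 1 := by
    refine (card_le_card fun k hk => ?_).trans (card_insert_le i _)
    rcases eq_or_ne k i with rfl | hk'
    · exact mem_insert_self _ _
    · simp_all
  have hβi : β i = Spart b t := by
    by_contra hne
    refine (hcard.trans_le (hβ.2 t ht)).not_ge (card_le_card fun k hk => ?_)
    rcases eq_or_ne k i with rfl | hk'
    · simp_all [β']
      omega
    · simp_all
  have hlt : #((({k | β k ≤ Spart b t} : Finset _)).erase i) < #{k | γ k ≤ Spart b t} := by
    rw [card_erase_of_mem (by simp [hβi])]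
    have := hγ.2 t ht
    omega
  obtain ⟨j, hjγ, hjβ⟩ := exists_mem_notMem_of_card_lt_card hlt
  have hji : j ≠ i := by rintro rfl; simp at hjγ; omega
  exact ⟨j, by simp_all, by simp_all⟩

end IsBParkingFunction

section ExposedSegment

variable {E : Type*} [AddCommGroup E] [Module ℝ E]

lemma exists_sub_eq_smul_of_add_mem_segment {v w z d : E} (hz : z ∈ segment ℝ v w)
    (hzd : z + d ∈ segment ℝ v w) (hd : d ≠ 0) : ∃ c : ℝ, w - v = c • d := by
  rw [segment_eq_image'] at hz hzd
  obtain ⟨a, -, rfl⟩ := hz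
  obtain ⟨θ, -, hθ⟩ := hzd
  have hd' : d = (θ - a) • (w - v) := by linear_combination (norm := module) -hθ
  have hθa : θ - a ≠ 0 := fun h => hd (by simp [hd', h])
  exact ⟨(θ - a)⁻¹, by rw [hd', inv_smul_smul₀ hθa]⟩

lemma IsExposed.exists_dual_neg_of_add_mem [TopologicalSpace E] {A : Set E} {v w : E}
    (h : IsExposed ℝ A (segment ℝ v w)) :
    ∃ l : StrongDual ℝ E, ∀ z ∈ segment ℝ v w, ∀ d, z + d ∈ A → d ≠ 0 →
      (∀ c : ℝ, w - v ≠ c • d) → l d < 0 := by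
  obtain ⟨l, hl⟩ := h ⟨v, left_mem_segment ℝ v w⟩
  refine ⟨l, fun z hz d hzd hd hpar => ?_⟩
  rw [hl] at hz
  have hle : l d ≤ 0 := by simpa using hz.2 _ hzd
  refine hle.lt_of_ne fun h0 => ?_
  have hmem : z + d ∈ segment ℝ v w := by
    rw [hl]
    exact ⟨hzd, fun y hy => by simpa [h0] using hz.2 y hy⟩
  obtain ⟨c, hc⟩ := exists_sub_eq_smul_of_add_mem_segment (hl ▸ hz) hmem hd
  exact hpar c hc

end ExposedSegment

section Lift

variable {n : ℕ}

lemma Fin.snoc_add_snoc {M : Type*} [Add M] (x y : Fin n → M) (a c : M) :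
    (Fin.snoc x a : Fin (n + 1) → M) + Fin.snoc y c = Fin.snoc (x + y) (a + c) := by
  ext k
  refine Fin.lastCases ?_ (fun k => ?_) k <;> simp

def liftLinear (n : ℕ) : (Fin n → ℝ) →ₗ[ℝ] (Fin (n + 1) → ℝ) where
  toFun y := Fin.snoc y (-∑ i, y i)
  map_add' x y := by simp only [Pi.add_apply, sum_add_distrib, neg_add, Fin.snoc_add_snoc]
  map_smul' c x := by
    ext k
    refine Fin.lastCases ?_ (fun k => ?_) k <;> simp [mul_sum]

/-- The paper's map `ℓ` is `liftAffine n B`. -/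
def liftAffine (n : ℕ) (C : ℝ) : (Fin n → ℝ) →ᵃ[ℝ] (Fin (n + 1) → ℝ) where
  toFun x := Fin.snoc x (C - ∑ i, x i)
  linear := liftLinear n
  map_vadd' x y := by
    simp only [vadd_eq_add, liftLinear, LinearMap.coe_mk, AddHom.coe_mk, Pi.add_apply,
      sum_add_distrib, Fin.snoc_add_snoc]
    ring_nf

lemma liftAffine_add (C : ℝ) (x y : Fin n → ℝ) :
    liftAffine n C (x + y) = liftAffine n C x + liftLinear n y := by
  rw [add_comm x y]
  exact ((liftAffine n C).map_vadd x y).trans (add_comm _ _)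

lemma liftLinear_single (i : Fin n) :
    liftLinear n (Pi.single i 1) = Pi.single i.castSucc 1 - Pi.single (Fin.last n) 1 := by
  ext k
  refine Fin.lastCases ?_ (fun k => ?_) k
  · simp [liftLinear, (Fin.castSucc_lt_last i).ne]
  · simp [liftLinear, Pi.single_apply, (Fin.castSucc_lt_last k).ne]

lemma liftLinear_single_sub_single (i j : Fin n) :
    liftLinear n (Pi.single i 1 - Pi.single j 1) =
      Pi.single i.castSucc 1 - Pi.single j.castSucc 1 := by
  simp only [map_sub, liftLinear_single]
  abel

end Lift

section Moves

variable {ι R : Type*} [DecidableEq ι]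

lemma Pi.update_eq_add_single [AddCommGroup R] (x : ι → R) (i : ι) (a : R) :
    Function.update x i a = x + Pi.single i (a - x i) := by
  rw [Pi.update_eq_sub_add_single, Pi.single_sub]
  abel

lemma Pi.comp_swap_eq_add_smul [Ring R] (x : ι → R) (i j : ι) :
    x ∘ Equiv.swap i j = x + (x j - x i) • (Pi.single i 1 - Pi.single j 1) := by
  ext k
  rcases eq_or_ne k i with rfl | hki
  · rcases eq_or_ne k j with rfl | hkj <;> simp [*]
  rcases eq_or_ne k j with rfl | hkj
  · simp [*]
  · simp [*, Equiv.swap_apply_of_ne_of_ne]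

variable {n : ℕ}

lemma liftAffine_natCast_update (C : ℝ) (β : Fin n → ℕ) (i : Fin n) (m : ℕ) :
    liftAffine n C (Nat.cast ∘ Function.update β i m) =
      liftAffine n C (Nat.cast ∘ β) +
        ((m : ℝ) - β i) • (Pi.single i.castSucc 1 - Pi.single (Fin.last n) 1) := by
  rw [Function.comp_update, Pi.update_eq_add_single, liftAffine_add, ← liftLinear_single,
    ← map_smul, ← Pi.single_smul', smul_eq_mul, mul_one]
  rfl

lemma liftAffine_natCast_comp_swap (C : ℝ) (β : Fin n → ℕ) (i j : Fin n) :
    liftAffine n C (Nat.cast ∘ (β ∘ Equiv.swap i j)) =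
      liftAffine n C (Nat.cast ∘ β) +
        ((β j : ℝ) - β i) • (Pi.single i.castSucc 1 - Pi.single j.castSucc 1) := by
  rw [← Function.comp_assoc, Pi.comp_swap_eq_add_smul, liftAffine_add, map_smul,
    liftLinear_single_sub_single]
  rfl

end Moves

def IsRootMultiple {m : ℕ} (d : Fin m → ℝ) : Prop :=
  ∃ p q, p ≠ q ∧ ∃ c : ℝ, d = c • (Pi.single p 1 - Pi.single q 1)

lemma IsRootMultiple.smul {m : ℕ} {d : Fin m → ℝ} (hd : IsRootMultiple d) (c : ℝ) :
    IsRootMultiple (c • d) := by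
  obtain ⟨p, q, hpq, a, rfl⟩ := hd
  exact ⟨p, q, hpq, c * a, (mul_smul c a _).symm⟩

variable {n : ℕ} {b : ℕ → ℕ}

lemma liftedPolytope_eq_convexHull :
    liftedPolytope n b = convexHull ℝ ((fun β => liftAffine n
      (∑ k ∈ Icc 1 n, (Spart b k : ℝ)) (Nat.cast ∘ β)) '' {β | IsBParkingFunction n b β}) := by
  rw [← Set.image_image (liftAffine n _) (Nat.cast ∘ ·), ← AffineMap.image_convexHull,
    liftedPolytope, bpfPolytope]
  congr
  ext x
  simp [eq_comm, Function.comp_def]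

lemma IsBParkingFunction.not_forall_rootMove_neg {C : ℝ} {β γ : Fin n → ℕ}
    (hβ : IsBParkingFunction n b β) (hγ : IsBParkingFunction n b γ) {i : Fin n} (hi : β i < γ i)
    (l : (Fin (n + 1) → ℝ) →ₗ[ℝ] ℝ)
    (hl : ∀ z ∈ ({β, γ} : Set (Fin n → ℕ)), ∀ δ, IsBParkingFunction n b δ →
      ∀ d, IsRootMultiple d → d ≠ 0 →
        liftAffine n C (Nat.cast ∘ δ) = liftAffine n C (Nat.cast ∘ z) + d → l d < 0) :
    False := by
  have move : ∀ z ∈ ({β, γ} : Set (Fin n → ℕ)), ∀ δ, IsBParkingFunction n b δ →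
      ∀ {p q : Fin (n + 1)}, p ≠ q → ∀ c : ℝ, c ≠ 0 →
        liftAffine n C (Nat.cast ∘ δ) =
          liftAffine n C (Nat.cast ∘ z) + c • (Pi.single p 1 - Pi.single q 1) →
        c * l (Pi.single p 1 - Pi.single q 1) < 0 := by
    intro z hz δ hδ p q hpq c hc h
    rw [← smul_eq_mul, ← map_smul]
    refine hl z hz δ hδ _ ⟨p, q, hpq, c, rfl⟩ (smul_ne_zero hc ?_) h
    exact sub_ne_zero.2 fun h => by simpa [hpq] using congrFun h p
  have hiβ : i.castSucc ≠ Fin.last n := (Fin.castSucc_lt_last i).ne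
  have hβi := hβ.1 i
  have hu : 0 < l (Pi.single i.castSucc 1 - Pi.single (Fin.last n) 1) := by
    have hc : ((γ i - 1 : ℕ) : ℝ) - γ i < 0 := sub_neg.2 (Nat.cast_lt.2 (by omega))
    exact pos_of_mul_neg_right (move γ (by simp) _ (hγ.update_pred (by omega)) hiβ _ hc.ne
      (liftAffine_natCast_update C γ i _)) hc.le
  have hsucc : ¬ IsBParkingFunction n b (Function.update β i (β i + 1)) := by
    intro h
    have hc : 0 < ((β i + 1 : ℕ) : ℝ) - β i := sub_pos.2 (Nat.cast_lt.2 (by omega))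
    exact (neg_of_mul_neg_right (move β (by simp) _ h hiβ _ hc.ne'
      (liftAffine_natCast_update C β i _)) hc.le).not_gt hu
  obtain ⟨j, hjγ, hjβ⟩ := hβ.exists_le_lt_of_not_update_succ hγ hi hsucc
  have hij : i.castSucc ≠ j.castSucc := by
    rw [Ne, Fin.castSucc_inj]
    rintro rfl
    omega
  have hcβ : 0 < (β j : ℝ) - β i := sub_pos.2 (Nat.cast_lt.2 hjβ)
  have hcγ : (γ j : ℝ) - γ i < 0 := sub_neg.2 (Nat.cast_lt.2 (by omega))
  have hneg := neg_of_mul_neg_right (move β (by simp) _ (hβ.comp_perm (Equiv.swap i j)) hij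
    _ hcβ.ne' (liftAffine_natCast_comp_swap C β i j)) hcβ.le
  have hpos := pos_of_mul_neg_right (move γ (by simp) _ (hγ.comp_perm (Equiv.swap i j)) hij
    _ hcγ.ne (liftAffine_natCast_comp_swap C γ i j)) hcγ.le
  exact hneg.not_gt hpos

theorem lifted_is_generalized_permutahedron_general (n : ℕ) (b : ℕ → ℕ) :
    ∀ v w : Fin (n + 1) → ℝ,
      v ∈ Set.extremePoints ℝ (liftedPolytope n b) →
      w ∈ Set.extremePoints ℝ (liftedPolytope n b) →
      v ≠ w → IsExposed ℝ (liftedPolytope n b) (segment ℝ v w) →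
      ∃ i j : Fin (n + 1), i ≠ j ∧ ∃ c : ℝ,
        w - v = c • ((Pi.single i (1 : ℝ) : Fin (n + 1) → ℝ)
          - (Pi.single j (1 : ℝ) : Fin (n + 1) → ℝ)) := by
  intro v w hv hw hvw hexp
  rw [liftedPolytope_eq_convexHull] at hv hw hexp
  obtain ⟨β, hβ, rfl⟩ := extremePoints_convexHull_subset hv
  obtain ⟨γ, hγ, rfl⟩ := extremePoints_convexHull_subset hw
  obtain ⟨l, hl⟩ := hexp.exists_dual_neg_of_add_mem
  set C : ℝ := ∑ k ∈ Icc 1 n, (Spart b k : ℝ)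
  by_contra hedge
  have key : ∀ z ∈ ({β, γ} : Set (Fin n → ℕ)), ∀ δ, IsBParkingFunction n b δ →
      ∀ d, IsRootMultiple d → d ≠ 0 →
        liftAffine n C (Nat.cast ∘ δ) = liftAffine n C (Nat.cast ∘ z) + d → l d < 0 := by
    rintro z hz δ hδ d hd hd0 hδz
    refine hl (liftAffine n C (Nat.cast ∘ z)) ?_ d ?_ hd0 fun c hc => hedge (hc ▸ hd.smul c)
    · rcases hz with rfl | rfl
      exacts [left_mem_segment ℝ _ _, right_mem_segment ℝ _ _]
    · rw [← hδz]
      exact subset_convexHull ℝ _ ⟨δ, hδ, rfl⟩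
  obtain ⟨i, hi⟩ : ∃ i, β i ≠ γ i := by
    by_contra! h
    exact hvw (by rw [funext h])
  rcases hi.lt_or_gt with hi | hi
  · exact hβ.not_forall_rootMove_neg hγ hi l key
  · exact hγ.not_forall_rootMove_neg hβ hi l (Set.pair_comm β γ ▸ key)

/-- The lifted `b`-parking-function polytope is a generalized permutahedron:
every edge is parallel to `e_i - e_j` for some `i ≠ j`. -/
theorem lifted_is_generalized_permutahedron (n : ℕ) (b : ℕ → ℕ)
    (hb : ∀ j < n, 1 ≤ b j) :
    ∀ v w : Fin (n + 1) → ℝ,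
      v ∈ Set.extremePoints ℝ (liftedPolytope n b) →
      w ∈ Set.extremePoints ℝ (liftedPolytope n b) →
      v ≠ w → IsExposed ℝ (liftedPolytope n b) (segment ℝ v w) →
      ∃ i j : Fin (n + 1), i ≠ j ∧ ∃ c : ℝ,
        w - v = c • ((Pi.single i (1 : ℝ) : Fin (n + 1) → ℝ)
          - (Pi.single j (1 : ℝ) : Fin (n + 1) → ℝ)) :=
  lifted_is_generalized_permutahedron_general n b
end

section
/- Every nested set for the building set B_{PF_n} = {{1},...,{n}} ∪ {S ∪ {n+1} : S ⊆ [n], |S| ≠ 1} has the form {{i}}_{i∈I} ∪ {A}_{A∈F}, where I ⊆ [n+1] with |I| ≤ 2 whenever n+1 ∈ I, F is a chain of subsets of [n+1] (excluding [n+1] itself) each containing n+1 and of size ≥ 3, and I ⊆ min(F) when F is nonempty; conversely every such collection is a nested set. -/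
/-- The building set `B_{PF_n} = {{1},…,{n}} ∪ {S ∪ {n+1} : S ⊆ [n], |S| ≠ 1}`
on `[n+1]`, where `n+1` is represented by `Fin.last n`. -/
def BPFBuilding (n : ℕ) : Set (Finset (Fin (n + 1))) :=
  {K | (Fin.last n ∉ K ∧ K.card = 1) ∨ (Fin.last n ∈ K ∧ K.card ≠ 2)}

/-- `N` is a nested set for `B_{PF_n}`: a subfamily of `B_{PF_n}` avoiding the
maximal element `[n+1]` such that (N1) any two members are comparable or
disjoint, and (N2) the union of any `k ≥ 2` pairwise disjoint members is not
in `B_{PF_n}`. -/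
def IsNestedSetPF (n : ℕ) (N : Set (Finset (Fin (n + 1)))) : Prop :=
  N ⊆ BPFBuilding n \ {Finset.univ} ∧
  (∀ A ∈ N, ∀ B ∈ N, A ⊆ B ∨ B ⊆ A ∨ Disjoint A B) ∧
  (∀ T : Finset (Finset (Fin (n + 1))), ↑T ⊆ N → 2 ≤ T.card →
    ((T : Set (Finset (Fin (n + 1)))).Pairwise Disjoint) →
    T.sup id ∉ BPFBuilding n)

/-!
A member of `B_{PF_n}` is either a singleton or contains `n+1` and has at least three elements.
Two members of the second kind meet at `n+1`, so (N1) makes them a chain; a singleton `{i}`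
disjoint from such an `A` would have the union `{i} ∪ A ∈ B_{PF_n}`, so (N2) forces `i ∈ A`.
Conversely, in `{{i}}_{i∈I} ∪ F` a disjoint family of at least two members consists of
singletons `{i}`, `i ∈ S ⊆ I`, whose union `S` lies in `B_{PF_n}` exactly when `n+1 ∈ S` and
`|S| ≥ 3`; this is what the bound `|I| ≤ 2` for `n+1 ∈ I` excludes.
-/

open Finset

section Singletons

variable {α : Type*} [DecidableEq α]

lemma pairwise_disjoint_image_singleton (S : Finset α) :
    ((S.image singleton : Finset (Finset α)) : Set (Finset α)).Pairwise Disjoint := by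
  rintro _ hA _ hB hAB
  obtain ⟨i, -, rfl⟩ := mem_image.1 hA
  obtain ⟨j, -, rfl⟩ := mem_image.1 hB
  exact disjoint_singleton.2 fun hij => hAB (hij ▸ rfl)

lemma sup_image_singleton (S : Finset α) : (S.image (singleton : α → Finset α)).sup id = S := by
  rw [sup_image, Function.id_comp, sup_singleton_eq_self]

lemma card_image_singleton (S : Finset α) : (S.image (singleton : α → Finset α)).card = S.card :=
  card_image_of_injective S singleton_injective

lemma exists_eq_image_singleton {T : Finset (Finset α)} (hT : ∀ K ∈ T, ∃ i, K = {i}) :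
    ∃ S : Finset α, T = S.image singleton := by
  refine ⟨T.sup id, ext fun K => ⟨fun hK => ?_, fun hK => ?_⟩⟩
  · obtain ⟨i, rfl⟩ := hT K hK
    exact mem_image.2 ⟨i, mem_sup.2 ⟨_, hK, mem_singleton_self i⟩, rfl⟩
  · obtain ⟨i, hi, rfl⟩ := mem_image.1 hK
    obtain ⟨L, hL, hiL⟩ := mem_sup.1 hi
    obtain ⟨j, rfl⟩ := hT L hL
    rwa [mem_singleton.1 hiL]

end Singletons

variable {n : ℕ}

lemma mem_BPFBuilding_iff {K : Finset (Fin (n + 1))} :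
    K ∈ BPFBuilding n ↔ (∃ i, K = {i}) ∨ (Fin.last n ∈ K ∧ 3 ≤ K.card) := by
  simp only [BPFBuilding, Set.mem_ofPred_eq, ← card_eq_one]
  by_cases hl : Fin.last n ∈ K
  · have := card_pos.2 ⟨_, hl⟩
    simp only [hl, not_true_eq_false, false_and, true_and, false_or]
    omega
  · simp [hl]

lemma singleton_mem_BPFBuilding (i : Fin (n + 1)) : {i} ∈ BPFBuilding n :=
  mem_BPFBuilding_iff.2 (Or.inl ⟨i, rfl⟩)

lemma last_mem_of_mem_BPFBuilding {K : Finset (Fin (n + 1))} (hK : K ∈ BPFBuilding n)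
    (h2 : 2 ≤ K.card) : Fin.last n ∈ K :=
  (hK.resolve_left fun h => by omega).1

namespace IsNestedSetPF

variable {N : Set (Finset (Fin (n + 1)))}

lemma union_notMem (hN : IsNestedSetPF n N) {A B : Finset (Fin (n + 1))} (hA : A ∈ N)
    (hB : B ∈ N) (hAB : A ≠ B) (hd : Disjoint A B) : A ∪ B ∉ BPFBuilding n := by
  have hT : (↑({A, B} : Finset _) : Set (Finset (Fin (n + 1)))).Pairwise Disjoint := by
    rw [coe_pair]
    exact Set.pairwise_pair_of_symm.2 fun _ => hd
  simpa using hN.2.2 {A, B} (by simp [Set.insert_subset_iff, hA, hB])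
    (card_pair hAB).ge hT

lemma notMem_of_singleton_mem (hN : IsNestedSetPF n N) {S : Finset (Fin (n + 1))}
    (hS : ∀ i ∈ S, {i} ∈ N) (h2 : 2 ≤ S.card) : S ∉ BPFBuilding n := by
  have hTN : ↑(S.image (singleton : _ → Finset (Fin (n + 1)))) ⊆ N := by
    intro K hK
    obtain ⟨i, hi, rfl⟩ := mem_image.1 hK
    exact hS i hi
  simpa only [sup_image_singleton] using hN.2.2 _ hTN
    (by rwa [card_image_singleton]) (pairwise_disjoint_image_singleton S)

lemma card_le_two_of_last_mem (hN : IsNestedSetPF n N) {S : Finset (Fin (n + 1))}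
    (hS : ∀ i ∈ S, {i} ∈ N) (hl : Fin.last n ∈ S) : S.card ≤ 2 := by
  by_contra! h3
  exact hN.notMem_of_singleton_mem hS (by omega) (mem_BPFBuilding_iff.2 (Or.inr ⟨hl, h3⟩))

lemma subset_or_subset_of_last_mem (hN : IsNestedSetPF n N) {A B : Finset (Fin (n + 1))}
    (hA : A ∈ N) (hB : B ∈ N) (hlA : Fin.last n ∈ A) (hlB : Fin.last n ∈ B) :
    A ⊆ B ∨ B ⊆ A :=
  (hN.2.1 A hA B hB).imp_right
    (Or.resolve_right · fun hd => disjoint_left.1 hd hlA hlB)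

lemma mem_of_singleton_mem (hN : IsNestedSetPF n N) {i : Fin (n + 1)} {A : Finset (Fin (n + 1))}
    (hi : {i} ∈ N) (hA : A ∈ N) (h3 : 3 ≤ A.card) : i ∈ A := by
  have hlA := last_mem_of_mem_BPFBuilding (hN.1 hA).1 (by omega)
  rcases hN.2.1 _ hi A hA with hiA | hAi | hd
  · exact singleton_subset_iff.1 hiA
  · have := card_le_card hAi
    simp only [card_singleton] at this
    omega
  · refine absurd (mem_BPFBuilding_iff.2 (Or.inr ⟨mem_union_right _ hlA, ?_⟩))
      (hN.union_notMem hi hA (by rintro rfl; simp at h3) hd)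
    exact h3.trans (card_le_card subset_union_right)

end IsNestedSetPF

lemma exists_eq_singleton_of_pairwise_disjoint {I : Finset (Fin (n + 1))}
    {F : Finset (Finset (Fin (n + 1)))} (hF : ∀ A ∈ F, Fin.last n ∈ A) (hIF : ∀ A ∈ F, I ⊆ A)
    {T : Finset (Finset (Fin (n + 1)))} (hTN : ↑T ⊆ {K | (∃ i ∈ I, K = {i}) ∨ K ∈ F})
    (hT2 : 2 ≤ T.card) (hTd : (T : Set (Finset (Fin (n + 1)))).Pairwise Disjoint) :
    ∀ K ∈ T, ∃ i ∈ I, K = {i} := by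
  intro K hK
  refine (hTN hK).resolve_right fun hKF => ?_
  obtain ⟨L, hL, hLK⟩ := exists_mem_ne (by omega : 1 < T.card) K
  have hd : Disjoint L K := hTd hL hK hLK
  rcases hTN hL with ⟨i, hi, rfl⟩ | hLF
  · exact disjoint_singleton_left.1 hd (hIF K hKF hi)
  · exact disjoint_left.1 hd (hF L hLF) (hF K hKF)

lemma isNestedSetPF_singletons_union (hn : 1 ≤ n) {I : Finset (Fin (n + 1))}
    {F : Finset (Finset (Fin (n + 1)))} (hI : Fin.last n ∈ I → I.card ≤ 2)
    (hF : IsChain (· ⊆ ·) (F : Set (Finset (Fin (n + 1)))))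
    (hFmem : ∀ A ∈ F, Fin.last n ∈ A ∧ 3 ≤ A.card ∧ A ≠ univ) (hIF : ∀ A ∈ F, I ⊆ A) :
    IsNestedSetPF n {K | (∃ i ∈ I, K = {i}) ∨ K ∈ F} := by
  refine ⟨?_, ?_, ?_⟩
  · rintro K (⟨i, -, rfl⟩ | hK)
    · refine ⟨singleton_mem_BPFBuilding i, fun h => ?_⟩
      have := congrArg card (Set.mem_singleton_iff.1 h)
      simp only [card_singleton, card_univ, Fintype.card_fin] at this
      omega
    · obtain ⟨hl, h3, hne⟩ := hFmem K hK
      exact ⟨mem_BPFBuilding_iff.2 (Or.inr ⟨hl, h3⟩), hne⟩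
  · rintro A (⟨i, hi, rfl⟩ | hA) B (⟨j, hj, rfl⟩ | hB)
    · obtain rfl | hij := eq_or_ne i j
      · exact Or.inl subset_rfl
      · exact Or.inr (Or.inr (disjoint_singleton.2 hij))
    · exact Or.inl (singleton_subset_iff.2 (hIF B hB hi))
    · exact Or.inr (Or.inl (singleton_subset_iff.2 (hIF A hA hj)))
    · obtain rfl | hAB := eq_or_ne A B
      · exact Or.inl subset_rfl
      · exact (hF hA hB hAB).imp_right Or.inl
  · intro T hTN hT2 hTd
    have hsingleton := exists_eq_singleton_of_pairwise_disjoint (fun A hA => (hFmem A hA).1)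
      hIF hTN hT2 hTd
    obtain ⟨S, rfl⟩ := exists_eq_image_singleton fun K hK =>
      (hsingleton K hK).imp fun _ => And.right
    have hSI : S ⊆ I := fun i hi => by
      obtain ⟨j, hj, hij⟩ := hsingleton {i} (mem_image_of_mem _ hi)
      rwa [singleton_injective hij]
    rw [sup_image_singleton, mem_BPFBuilding_iff, ← card_eq_one]
    rw [card_image_singleton] at hT2
    rintro (h1 | ⟨hl, h3⟩)
    · omega
    · have := card_le_card hSI
      have := hI (hSI hl)
      omega

/-- Characterization of the nested sets for `B_{PF_n}`: they are exactly the
collections `{{i}}_{i∈I} ∪ {A}_{A∈F}` where `I ⊆ [n+1]` with `|I| ≤ 2` whenever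
`n+1 ∈ I`, `F` is a chain of proper subsets of `[n+1]` each containing `n+1`
and of size `≥ 3`, and `I ⊆ A` for every `A ∈ F`. -/
theorem nested_set_characterization (n : ℕ) (hn : 2 ≤ n)
    (N : Set (Finset (Fin (n + 1)))) :
    IsNestedSetPF n N ↔
      ∃ (I : Finset (Fin (n + 1))) (F : Finset (Finset (Fin (n + 1)))),
        N = {K | (∃ i ∈ I, K = {i}) ∨ K ∈ F} ∧
        (Fin.last n ∈ I → I.card ≤ 2) ∧
        IsChain (· ⊆ ·) (F : Set (Finset (Fin (n + 1)))) ∧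
        (∀ A ∈ F, Fin.last n ∈ A ∧ 3 ≤ A.card ∧ A ≠ Finset.univ) ∧
        (∀ A ∈ F, I ⊆ A) := by
  classical
  refine ⟨fun hN => ?_, fun ⟨I, F, hNIF, hI, hF, hFmem, hIF⟩ =>
    hNIF ▸ isNestedSetPF_singletons_union (by omega) hI hF hFmem hIF⟩
  have hlast : ∀ A ∈ N, 3 ≤ A.card → Fin.last n ∈ A := fun A hA h3 =>
    last_mem_of_mem_BPFBuilding (hN.1 hA).1 (by omega)
  refine ⟨univ.filter fun i => {i} ∈ N, univ.filter fun A => A ∈ N ∧ 3 ≤ A.card,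
    ?_, fun hl => hN.card_le_two_of_last_mem (by simp) (by simpa using hl), ?_, ?_, ?_⟩
  · ext K
    simp only [Set.mem_ofPred_eq, mem_filter, mem_univ, true_and]
    refine ⟨fun hK => ?_, by rintro (⟨i, hi, rfl⟩ | ⟨hK, -⟩) <;> assumption⟩
    rcases mem_BPFBuilding_iff.1 (hN.1 hK).1 with ⟨i, rfl⟩ | ⟨-, h3⟩
    exacts [Or.inl ⟨i, hK, rfl⟩, Or.inr ⟨hK, h3⟩]
  · intro A hA B hB _
    simp only [coe_filter, mem_univ, true_and, Set.mem_ofPred_eq] at hA hB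
    exact hN.subset_or_subset_of_last_mem hA.1 hB.1 (hlast A hA.1 hA.2)
      (hlast B hB.1 hB.2)
  · intro A hA
    simp only [mem_filter, mem_univ, true_and] at hA
    exact ⟨hlast A hA.1 hA.2, hA.2, (hN.1 hA.1).2⟩
  · intro A hA i hi
    simp only [mem_filter, mem_univ, true_and] at hA hi
    exact hN.mem_of_singleton_mem hi hA.1 hA.2
end
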